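/- arXiv:2206.01671 — 3 statements merged into one kernel-verified Lean document; each statement's English description precedes it below -/
import Mathlib

section
/- Let X be a second-countable submetrizable topological space such that every second-countable metrizable topological space of cardinality at most the cardinality of X is a Q-space (equivalently, the cardinality of X is strictly less than the cardinal 𝔮₀, the smallest cardinality of a second-countable metrizable space that is not a Q-space). Then X is symmetrizable. -/
/-
Let `t'` be a metrizable topology coarser than the topology `t` of `X`. It is separable, hence
second countable, and has the cardinality of `X`, so it is a Q-space; thus every `t`-closed set
is `t'`-Gδ, hence `t`-Gδ. For a basic open set `s = ⋃ₙ Fₙ` (`Fₙ` closed) put `hₛ x = 2⁻ⁿ` for the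
least `n` with `x ∈ Fₙ`, and `hₛ = 0` off `s`: then `hₛ` is positive exactly on `s` and continuous
at every point off `s`. Summing over a countable base with positive summable weights `wₛ`,
`d x y = ∑ₛ wₛ [x, y separated by s] (hₛ x + hₛ y)` is a symmetric; the `d`-ball of radius
`wₛ hₛ x` about `x ∈ s` stays in `s`, and `d x y → 0` as `y → x` by dominated convergence, so `d`
generates the topology. Distinct points are separated by a basic set since `X` is Hausdorff.
-/

/-- A symmetric on `X`: nonnegative, vanishing exactly on the diagonal, symmetric. -/
def SymmetricDist {X : Type*} (d : X → X → ℝ) : Prop :=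
  (∀ x y, 0 ≤ d x y) ∧ (∀ x y, d x y = 0 ↔ x = y) ∧ (∀ x y, d x y = d y x)

/-- The topology of `X` is generated by the premetric `d`: a set is open iff
every point of it contains some `d`-ball around the point. -/
def GeneratesTopology {X : Type*} [TopologicalSpace X] (d : X → X → ℝ) : Prop :=
  ∀ U : Set X, IsOpen U ↔ ∀ x ∈ U, ∃ ε > 0, {y : X | d x y < ε} ⊆ U

/-- A topological space is symmetrizable if its topology is generated by some symmetric. -/
def Symmetrizable (X : Type*) [TopologicalSpace X] : Prop :=
  ∃ d : X → X → ℝ, SymmetricDist d ∧ GeneratesTopology d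

/-- A topological space is a Q-space if every subset is a Gδ-set. -/
def QSpace (X : Type*) [TopologicalSpace X] : Prop := ∀ A : Set X, IsGδ A

/-- A topological space is submetrizable if there is a coarser metrizable topology. -/
def Submetrizable (X : Type*) [t : TopologicalSpace X] : Prop :=
  ∃ t' : TopologicalSpace X, (∀ U : Set X, t'.IsOpen U → t.IsOpen U) ∧
    @TopologicalSpace.MetrizableSpace X t'

universe u

open Filter Topology TopologicalSpace Set

section

variable {X : Type*}

theorem IsGδ.mono {t₁ t₂ : TopologicalSpace X} {s : Set X} (hs : @IsGδ X t₂ s) (h : t₁ ≤ t₂) :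
    @IsGδ X t₁ s :=
  let ⟨T, hT, hTc, hsT⟩ := hs
  ⟨T, fun U hU => (hT U hU).mono h, hTc, hsT⟩

theorem secondCountableTopology_of_le {t t' : TopologicalSpace X} (h : t ≤ t')
    [@SecondCountableTopology X t] [@PseudoMetrizableSpace X t'] :
    @SecondCountableTopology X t' := by
  have : @SeparableSpace X t' :=
    @DenseRange.separableSpace X X t _ t' id Function.surjective_id.denseRange
      (continuous_id_iff_le.2 h)
  let := @pseudoMetrizableSpaceUniformity X t' _
  have := pseudoMetrizableSpaceUniformity_countably_generated X
  exact UniformSpace.secondCountable_of_separable X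

open scoped Classical in
noncomputable def sepDist (s : Set X) (h : X → ℝ) (x y : X) : ℝ :=
  if (x ∈ s ↔ y ∈ s) then 0 else h x + h y

theorem sepDist_of_iff {s : Set X} {h : X → ℝ} {x y : X} (hxy : x ∈ s ↔ y ∈ s) :
    sepDist s h x y = 0 := by
  rw [sepDist, if_pos hxy]

theorem sepDist_of_not_iff {s : Set X} {h : X → ℝ} {x y : X} (hxy : ¬(x ∈ s ↔ y ∈ s)) :
    sepDist s h x y = h x + h y := by
  rw [sepDist, if_neg hxy]

theorem sepDist_self (s : Set X) (h : X → ℝ) (x : X) : sepDist s h x x = 0 :=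
  sepDist_of_iff Iff.rfl

theorem sepDist_comm (s : Set X) (h : X → ℝ) (x y : X) : sepDist s h x y = sepDist s h y x := by
  by_cases hxy : x ∈ s ↔ y ∈ s
  · rw [sepDist_of_iff hxy, sepDist_of_iff hxy.symm]
  · rw [sepDist_of_not_iff hxy, sepDist_of_not_iff (mt Iff.symm hxy), add_comm]

end

section

variable {X : Type*} [TopologicalSpace X]

theorem generatesTopology_of_tendsto {d : X → X → ℝ}
    (hball : ∀ U : Set X, IsOpen U → ∀ x ∈ U, ∃ ε > 0, {y | d x y < ε} ⊆ U)
    (htendsto : ∀ x, Tendsto (d x) (𝓝 x) (𝓝 0)) : GeneratesTopology d := by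
  refine fun U => ⟨hball U, fun hU => isOpen_iff_mem_nhds.2 fun x hx => ?_⟩
  obtain ⟨ε, hε, hsub⟩ := hU x hx
  exact mem_of_superset (htendsto x (Iio_mem_nhds hε)) hsub

structure IsSeparatingWeight (s : Set X) (h : X → ℝ) : Prop where
  nonneg : ∀ x, 0 ≤ h x
  le_one : ∀ x, h x ≤ 1
  pos_of_mem : ∀ x ∈ s, 0 < h x
  eq_zero_of_notMem : ∀ x ∉ s, h x = 0
  tendsto_zero : ∀ x ∉ s, Tendsto h (𝓝 x) (𝓝 0)

theorem exists_isSeparatingWeight {s : Set X} (hs : IsGδ sᶜ) : ∃ h, IsSeparatingWeight s h := by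
  classical
  obtain ⟨G, hG, hsG⟩ := hs.eq_iInter_nat
  have hmem : ∀ x, x ∈ s ↔ ∃ n, x ∉ G n := fun x => by
    rw [← compl_compl s, hsG]
    simp
  set h : X → ℝ := fun x => if hx : ∃ n, x ∉ G n then (1 / 2) ^ Nat.find hx else 0
  have h_of_mem : ∀ x (hx : ∃ n, x ∉ G n), h x = (1 / 2) ^ Nat.find hx := fun x hx => dif_pos hx
  have h_of_notMem : ∀ x ∉ s, h x = 0 := fun x hx => dif_neg ((hmem x).not.1 hx)
  have h_nonneg : ∀ x, 0 ≤ h x := fun x => by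
    by_cases hx : ∃ n, x ∉ G n
    · rw [h_of_mem x hx]; positivity
    · rw [h_of_notMem x ((hmem x).not.2 hx)]
  have h_le_of_mem : ∀ M x, (∀ m < M, x ∈ G m) → h x ≤ (1 / 2) ^ M := fun M x hx => by
    by_cases hx' : ∃ n, x ∉ G n
    · rw [h_of_mem x hx']
      exact pow_le_pow_of_le_one (by norm_num) (by norm_num)
        ((Nat.le_find_iff hx' M).2 fun m hm => not_not.2 (hx m hm))
    · rw [h_of_notMem x ((hmem x).not.2 hx')]; positivity
  refine ⟨h, h_nonneg, fun x => ?_, fun x hx => ?_, h_of_notMem, fun x hx => ?_⟩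
  · simpa using h_le_of_mem 0 x (by simp)
  · rw [h_of_mem x ((hmem x).1 hx)]; positivity
  · have hxG : ∀ n, x ∈ G n := by simpa [hmem] using hx
    refine tendsto_order.2 ⟨fun a ha => .of_forall fun y => ha.trans_le (h_nonneg y),
      fun a ha => ?_⟩
    obtain ⟨M, hM⟩ := exists_pow_lt_of_lt_one ha (by norm_num : (1 / 2 : ℝ) < 1)
    have hnear : ∀ᶠ y in 𝓝 x, ∀ m ∈ Iio M, y ∈ G m :=
      (finite_Iio M).eventually_all.2 fun m _ => (hG m).mem_nhds (hxG m)
    exact hnear.mono fun y hy => (h_le_of_mem M y hy).trans_lt hM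

namespace IsSeparatingWeight

variable {s : Set X} {h : X → ℝ}

theorem sepDist_nonneg (hh : IsSeparatingWeight s h) (x y : X) : 0 ≤ sepDist s h x y := by
  by_cases hxy : x ∈ s ↔ y ∈ s
  · rw [sepDist_of_iff hxy]
  · rw [sepDist_of_not_iff hxy]
    exact add_nonneg (hh.nonneg x) (hh.nonneg y)

theorem sepDist_le_two (hh : IsSeparatingWeight s h) (x y : X) : sepDist s h x y ≤ 2 := by
  by_cases hxy : x ∈ s ↔ y ∈ s
  · rw [sepDist_of_iff hxy]
    norm_num
  · rw [sepDist_of_not_iff hxy]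
    linarith [hh.le_one x, hh.le_one y]

theorem sepDist_pos (hh : IsSeparatingWeight s h) {x y : X} (hxy : ¬(x ∈ s ↔ y ∈ s)) :
    0 < sepDist s h x y := by
  rw [sepDist_of_not_iff hxy]
  by_cases hx : x ∈ s
  · exact add_pos_of_pos_of_nonneg (hh.pos_of_mem x hx) (hh.nonneg y)
  · exact add_pos_of_nonneg_of_pos (hh.nonneg x) (hh.pos_of_mem y (by tauto))

theorem le_sepDist (hh : IsSeparatingWeight s h) {x y : X} (hx : x ∈ s) (hy : y ∉ s) :
    h x ≤ sepDist s h x y := by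
  rw [sepDist_of_not_iff (by tauto)]
  linarith [hh.nonneg y]

theorem tendsto_sepDist (hh : IsSeparatingWeight s h) (hs : IsOpen s) (x : X) :
    Tendsto (sepDist s h x) (𝓝 x) (𝓝 0) := by
  by_cases hx : x ∈ s
  · refine tendsto_const_nhds.congr' ?_
    filter_upwards [hs.mem_nhds hx] with y hy
    exact (sepDist_of_iff (iff_of_true hx hy)).symm
  · refine squeeze_zero (hh.sepDist_nonneg x) (fun y => ?_) (hh.tendsto_zero x hx)
    by_cases hy : y ∈ s
    · rw [sepDist_of_not_iff (by tauto), hh.eq_zero_of_notMem x hx, zero_add]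
    · exact (sepDist_of_iff (iff_of_false hx hy)).trans_le (hh.nonneg y)

end IsSeparatingWeight

theorem symmetrizable_of_forall_isClosed_isGδ [SecondCountableTopology X] [T0Space X]
    (hGδ : ∀ s : Set X, IsClosed s → IsGδ s) : Symmetrizable X := by
  obtain ⟨B, hBc, -, hB⟩ := exists_countable_basis X
  have := hBc.toEncodable
  choose h hh using fun s : B => exists_isSeparatingWeight (hGδ _ (hB.isOpen s.2).isClosed_compl)
  obtain ⟨w, hw, _, hwc, -⟩ := posSumOfEncodable one_pos B
  set d : X → X → ℝ := fun x y => ∑' s : B, w s * sepDist s (h s) x y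
  have hterm_nonneg : ∀ x y (s : B), 0 ≤ w s * sepDist s (h s) x y := fun x y s =>
    mul_nonneg (hw s).le ((hh s).sepDist_nonneg x y)
  have hterm_le : ∀ x y (s : B), w s * sepDist s (h s) x y ≤ 2 * w s := fun x y s => by
    nlinarith [(hh s).sepDist_le_two x y, hw s]
  have hsum : ∀ x y, Summable fun s : B => w s * sepDist s (h s) x y := fun x y =>
    .of_nonneg_of_le (hterm_nonneg x y) (hterm_le x y) (hwc.summable.mul_left 2)
  refine ⟨d, ⟨fun x y => tsum_nonneg (hterm_nonneg x y), fun x y => ⟨fun hd => ?_, ?_⟩,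
    fun x y => tsum_congr fun s => by rw [sepDist_comm]⟩, generatesTopology_of_tendsto ?_ ?_⟩
  · by_contra hxy
    obtain ⟨s, hs, hsxy⟩ : ∃ s ∈ B, ¬(x ∈ s ↔ y ∈ s) := by
      simpa using mt hB.eq_iff.2 hxy
    refine hd.not_gt ((hsum x y).tsum_pos (hterm_nonneg x y) ⟨s, hs⟩ ?_)
    exact mul_pos (hw _) ((hh _).sepDist_pos hsxy)
  · rintro rfl
    simp [d, sepDist_self]
  · intro U hU x hx
    obtain ⟨s, hs, hxs, hsU⟩ := hB.exists_subset_of_mem_open hx hU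
    refine ⟨w ⟨s, hs⟩ * h ⟨s, hs⟩ x, mul_pos (hw _) ((hh _).pos_of_mem x hxs), fun y hy => ?_⟩
    by_contra hyU
    refine (?_ : _ ≤ d x y).not_gt hy
    calc w ⟨s, hs⟩ * h ⟨s, hs⟩ x ≤ w ⟨s, hs⟩ * sepDist s (h ⟨s, hs⟩) x y :=
          mul_le_mul_of_nonneg_left ((hh _).le_sepDist hxs (fun hy => hyU (hsU hy))) (hw _).le
      _ ≤ d x y := (hsum x y).le_tsum _ fun s _ => hterm_nonneg x y s
  · intro x
    have := tendsto_tsum_of_dominated_convergence (hwc.summable.mul_left 2)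
      (fun s : B => ((hh s).tendsto_sepDist (hB.isOpen s.2) x).const_mul (w s))
      (.of_forall fun y s => by
        rw [Real.norm_of_nonneg (hterm_nonneg x y s)]
        exact hterm_le x y s)
    simpa using this

end

theorem symmetrizable_of_le_of_qSpace {X : Type*} {t t' : TopologicalSpace X} (hle : t ≤ t')
    [@SecondCountableTopology X t] [@MetrizableSpace X t'] (hQ : @QSpace X t') :
    @Symmetrizable X t :=
  have : @T2Space X t := t2Space_antitone hle inferInstance
  @symmetrizable_of_forall_isClosed_isGδ X t _ _ fun s _ => (hQ s).mono hle

/-- Every second-countable submetrizable space of cardinality `< 𝔮₀` is symmetrizable. -/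
theorem submetrizable_small_symmetrizable {X : Type u} [TopologicalSpace X]
    [SecondCountableTopology X] (hsub : Submetrizable X)
    (hsmall : ∀ (Y : Type u) [TopologicalSpace Y] [SecondCountableTopology Y]
      [TopologicalSpace.MetrizableSpace Y],
      Cardinal.mk Y ≤ Cardinal.mk X → QSpace Y) :
    Symmetrizable X := by
  obtain ⟨t', hle, hmet⟩ := hsub
  have := secondCountableTopology_of_le (t' := t') hle
  exact symmetrizable_of_le_of_qSpace (t' := t') hle (hsmall X le_rfl)
end

section
/- Let X be a second-countable Hausdorff topological space such that every second-countable Hausdorff topological space of cardinality at most the cardinality of X is a Q-space (equivalently, the cardinality of X is strictly less than the cardinal 𝔮₂, the smallest cardinality of a second-countable Hausdorff space that is not a Q-space). Then X is symmetrizable. -/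
/-!
Enumerate a countable base `B 0, B 1, …`. In a Q-space every closed set is a Gδ, so each `B i`
is an increasing union of closed sets `C i 0 ⊆ C i 1 ⊆ …`. Let `W n x` be the set of `y` such
that for every `i ≤ n`, `x ∈ C i n` forces `y ∈ B i` and `y ∈ C i n` forces `x ∈ B i`. This is
open (finitely many conditions, each cutting out an open set or the complement of a closed one),
symmetric in `x` and `y` by construction, and for `x ∈ B i` it lies inside `B i` once `n` is large,
so the `W n x` form a decreasing neighbourhood base at `x`. Then `d x y = 1 / (N + 1)`, for the
first `N` with `y ∉ W N x`, is a symmetric whose balls are exactly the `W n x`.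
-/

open Filter Set Topology TopologicalSpace

section Symmetrizable

variable {X : Type*}

theorem IsGδ.exists_monotone_isClosed_iUnion_eq_compl [TopologicalSpace X] {s : Set X}
    (hs : IsGδ s) : ∃ C : ℕ → Set X, (∀ n, IsClosed (C n)) ∧ Monotone C ∧ ⋃ n, C n = sᶜ := by
  obtain ⟨U, hU, rfl⟩ := hs.eq_iInter_nat
  refine ⟨accumulate fun n => (U n)ᶜ, fun n => ?_, monotone_accumulate, ?_⟩
  · rw [accumulate_def]
    exact (finite_Iic n).isClosed_biUnion fun m _ => (hU m).isClosed_compl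
  · rw [iUnion_accumulate, compl_iInter]

noncomputable def levelDist (W : ℕ → X → Set X) (x y : X) : ℝ :=
  open Classical in
  if {n | y ∉ W n x}.Nonempty then ((sInf {n | y ∉ W n x} : ℕ) + 1 : ℝ)⁻¹ else 0

section LevelDist

variable {W : ℕ → X → Set X}

theorem levelDist_nonneg (x y : X) : 0 ≤ levelDist W x y := by
  unfold levelDist
  split_ifs <;> positivity

theorem levelDist_eq_zero_iff (x y : X) : levelDist W x y = 0 ↔ ∀ n, y ∈ W n x := by
  unfold levelDist
  split_ifs with h
  · obtain ⟨n, hn⟩ := h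
    exact iff_of_false (by positivity) fun hy => hn (hy n)
  · exact iff_of_true rfl fun n => not_not.1 fun hn => h ⟨n, hn⟩

theorem levelDist_lt_iff (hW : ∀ x, Antitone (W · x)) (x y : X) (n : ℕ) :
    levelDist W x y < ((n : ℝ) + 1)⁻¹ ↔ y ∈ W n x := by
  unfold levelDist
  split_ifs with h
  · rw [inv_lt_inv₀ (by positivity) (by positivity), add_lt_add_iff_right, Nat.cast_lt]
    refine ⟨fun hn => not_not.1 (Nat.notMem_of_lt_sInf hn), fun hy => ?_⟩
    by_contra! hle
    exact Nat.sInf_mem h (hW x hle hy)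
  · exact iff_of_true (by positivity) (not_not.1 fun hn => h ⟨n, hn⟩)

theorem levelDist_comm (hW : ∀ n x y, y ∈ W n x → x ∈ W n y) (x y : X) :
    levelDist W x y = levelDist W y x := by
  have hxy : {n | y ∉ W n x} = {n | x ∉ W n y} :=
    Set.ext fun n => not_congr ⟨hW n x y, hW n y x⟩
  rw [levelDist, levelDist, hxy]

end LevelDist

theorem symmetrizable_of_hasAntitoneBasis [TopologicalSpace X] [T1Space X] (W : ℕ → X → Set X)
    (hbasis : ∀ x, (𝓝 x).HasAntitoneBasis (W · x)) (hsymm : ∀ n x y, y ∈ W n x → x ∈ W n y) :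
    Symmetrizable X := by
  have hball := levelDist_lt_iff fun x => (hbasis x).antitone
  refine ⟨levelDist W, ⟨levelDist_nonneg, fun x y => ?_, levelDist_comm hsymm⟩, fun U => ?_⟩
  · rw [levelDist_eq_zero_iff]
    refine ⟨fun hy => ?_, fun h n => h ▸ mem_of_mem_nhds ((hbasis x).mem n)⟩
    by_contra hxy
    obtain ⟨n, hn⟩ := (hbasis x).mem_iff.1 (isOpen_compl_singleton.mem_nhds hxy)
    exact hn (hy n) rfl
  · refine isOpen_iff_mem_nhds.trans (forall₂_congr fun x _ => (hbasis x).mem_iff.trans ?_)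
    constructor
    · rintro ⟨n, hn⟩
      exact ⟨_, by positivity, fun y hy => hn ((hball x y n).1 hy)⟩
    · rintro ⟨ε, hε, hU⟩
      obtain ⟨n, hn⟩ := exists_nat_one_div_lt hε
      exact ⟨n, fun y hy => hU (((hball x y n).2 hy).trans (one_div ((n : ℝ) + 1) ▸ hn))⟩

end Symmetrizable

section PairedNbhd

variable {X : Type*} {B : ℕ → Set X} {C : ℕ → ℕ → Set X}

def pairedNbhd (B : ℕ → Set X) (C : ℕ → ℕ → Set X) (n : ℕ) (x : X) : Set X :=
  {y | ∀ i ≤ n, (x ∈ C i n → y ∈ B i) ∧ (y ∈ C i n → x ∈ B i)}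

theorem mem_pairedNbhd_symm {n : ℕ} {x y : X} (h : y ∈ pairedNbhd B C n x) :
    x ∈ pairedNbhd B C n y :=
  fun i hi => (h i hi).symm

theorem mem_pairedNbhd_self (hCB : ∀ i n, C i n ⊆ B i) (n : ℕ) (x : X) :
    x ∈ pairedNbhd B C n x :=
  fun i _ => ⟨fun h => hCB i n h, fun h => hCB i n h⟩

theorem antitone_pairedNbhd (hC : ∀ i, Monotone (C i)) (x : X) :
    Antitone (pairedNbhd B C · x) := fun _ _ hmn _ hy i hi =>
  ⟨fun h => (hy i (hi.trans hmn)).1 (hC i hmn h), fun h => (hy i (hi.trans hmn)).2 (hC i hmn h)⟩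

variable [TopologicalSpace X]

theorem isOpen_pairedNbhd (hB : ∀ i, IsOpen (B i)) (hC : ∀ i n, IsClosed (C i n)) (n : ℕ)
    (x : X) : IsOpen (pairedNbhd B C n x) := by
  have hW : pairedNbhd B C n x =
      ⋂ i ∈ Iic n, {y | x ∈ C i n → y ∈ B i} ∩ {y | y ∈ C i n → x ∈ B i} := by
    ext y
    simp [pairedNbhd]
  rw [hW]
  refine (finite_Iic n).isOpen_biInter fun i _ => IsOpen.inter ?_ ?_
  · by_cases hx : x ∈ C i n <;> simp [hx, hB i]
  · by_cases hx : x ∈ B i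
    · simp [hx]
    · simp only [hx, imp_false]
      exact (hC i n).isOpen_compl

theorem hasAntitoneBasis_pairedNbhd (hB : IsTopologicalBasis (range B))
    (hC : ∀ i n, IsClosed (C i n)) (hCmono : ∀ i, Monotone (C i)) (hCB : ∀ i, ⋃ n, C i n = B i)
    (x : X) : (𝓝 x).HasAntitoneBasis (pairedNbhd B C · x) := by
  have hCB' : ∀ i n, C i n ⊆ B i := fun i n => hCB i ▸ subset_iUnion (C i) n
  refine ⟨⟨fun t => ⟨fun ht => ?_, fun ⟨n, _, hn⟩ => mem_of_superset ?_ hn⟩⟩,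
    antitone_pairedNbhd hCmono x⟩
  · obtain ⟨_, ⟨i, rfl⟩, hx, hBt⟩ := hB.mem_nhds_iff.1 ht
    obtain ⟨m, hm⟩ := mem_iUnion.1 ((hCB i).symm ▸ hx)
    exact ⟨max i m, trivial, fun y hy =>
      hBt ((hy i (le_max_left i m)).1 (hCmono i (le_max_right i m) hm))⟩
  · exact (isOpen_pairedNbhd (fun i => hB.isOpen (mem_range_self i)) hC n x).mem_nhds
      (mem_pairedNbhd_self hCB' n x)

end PairedNbhd

theorem exists_symmetric_hasAntitoneBasis_nhds {X : Type*} [TopologicalSpace X]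
    [SecondCountableTopology X] (h : ∀ s : Set X, IsClosed s → IsGδ s) :
    ∃ W : ℕ → X → Set X, (∀ x, (𝓝 x).HasAntitoneBasis (W · x)) ∧
      ∀ n x y, y ∈ W n x → x ∈ W n y := by
  obtain ⟨B, hB⟩ := exists_seq_basis X
  have hBopen : ∀ i, IsOpen (B i) := fun i => hB.isOpen (mem_range_self i)
  choose C hC hCmono hCB using fun i =>
    (h _ (hBopen i).isClosed_compl).exists_monotone_isClosed_iUnion_eq_compl
  simp only [compl_compl] at hCB
  exact ⟨pairedNbhd B C, hasAntitoneBasis_pairedNbhd hB hC hCmono hCB,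
    fun _ _ _ => mem_pairedNbhd_symm⟩

universe u

/-- Every second-countable Hausdorff space of cardinality `< 𝔮₂` is symmetrizable. -/
theorem t2_small_symmetrizable {X : Type u} [TopologicalSpace X]
    [SecondCountableTopology X] [T2Space X]
    (hsmall : ∀ (Y : Type u) [TopologicalSpace Y] [SecondCountableTopology Y]
      [T2Space Y], Cardinal.mk Y ≤ Cardinal.mk X → QSpace Y) :
    Symmetrizable X := by
  obtain ⟨W, hbasis, hsymm⟩ := exists_symmetric_hasAntitoneBasis_nhds fun s _ => hsmall X le_rfl s
  exact symmetrizable_of_hasAntitoneBasis W hbasis hsymm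
end

section
/- There exists a second-countable Hausdorff topological space X which is not symmetrizable and whose cardinality equals 𝔮₂, the smallest cardinality of a second-countable Hausdorff space that is not a Q-space. -/
universe u

open Cardinal in
/-- `𝔮₂`: the smallest cardinality of a second-countable Hausdorff space
which is not a Q-space. -/
noncomputable def q2 : Cardinal.{u} :=
  sInf { c : Cardinal.{u} | ∃ (Y : Type u) (tY : TopologicalSpace Y),
    @SecondCountableTopology Y tY ∧ @T2Space Y tY ∧
    ¬ @QSpace Y tY ∧ Cardinal.mk Y = c }

/-!
Second-countable spaces have at most `𝔠` Gδ-sets (they are all Borel), so `ℝ` is not a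
Q-space and `𝔮₂` is attained by a second-countable Hausdorff space `Y` with a subset `A` that
is not Gδ. Refine the topology of `Y` by declaring `A` closed. The new space is still
second-countable and Hausdorff, and points of `A` keep their neighbourhoods, so `A` is still
not Gδ. But in a first-countable Hausdorff space generated by a symmetric `d`, a closed set `A`
is the intersection of the complements of the closures of `{x | ∀ b ∈ A, 1/(n+1) ≤ d b x}`.
-/

open Cardinal TopologicalSpace Set Filter Topology

lemma mk_isGδ_le_continuum (X : Type*) [TopologicalSpace X] [SecondCountableTopology X] :
    #{A : Set X | IsGδ A} ≤ 𝔠 := by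
  let := borel X
  have : BorelSpace X := ⟨rfl⟩
  have hborel : borel X = MeasurableSpace.generateFrom (countableBasis X) :=
    borel_eq_generateFrom_of_subbasis (eq_generateFrom_countableBasis X)
  calc #{A : Set X | IsGδ A}
      ≤ #{A : Set X | @MeasurableSet X (.generateFrom (countableBasis X)) A} :=
        mk_le_mk_of_subset fun A hA => hborel ▸ hA.measurableSet
    _ ≤ 𝔠 := MeasurableSpace.cardinal_measurableSet_le_continuum <|
        (countable_countableBasis X).le_aleph0.trans aleph0_le_continuum

lemma not_qSpace_of_continuum_le (X : Type*) [TopologicalSpace X] [SecondCountableTopology X]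
    (hX : 𝔠 ≤ #X) : ¬ QSpace X := fun hQ =>
  (cantor #X).not_ge <| calc
    2 ^ #X = #{A : Set X | IsGδ A} := by
      rw [← mk_set]; exact (mk_congr (Equiv.subtypeUnivEquiv hQ)).symm
    _ ≤ 𝔠 := mk_isGδ_le_continuum X
    _ ≤ #X := hX

lemma exists_not_qSpace_mk_eq_q2 :
    ∃ (Y : Type u) (tY : TopologicalSpace Y), @SecondCountableTopology Y tY ∧ @T2Space Y tY ∧
      ¬ @QSpace Y tY ∧ #Y = q2.{u} :=
  csInf_mem (s := {c | ∃ (Y : Type u) (tY : TopologicalSpace Y),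
      @SecondCountableTopology Y tY ∧ @T2Space Y tY ∧ ¬ @QSpace Y tY ∧ #Y = c})
    ⟨_, ULift.{u} ℝ, inferInstance, inferInstance, inferInstance,
      not_qSpace_of_continuum_le _ (by rw [mk_uLift, mk_real, lift_continuum]), rfl⟩

section Refinement

variable {X : Type*}

lemma secondCountableTopology_inf_generateFrom (t : TopologicalSpace X)
    [ht : @SecondCountableTopology X t] {s : Set (Set X)} (hs : s.Countable) :
    @SecondCountableTopology X (t ⊓ generateFrom s) := by
  obtain ⟨b, hb, rfl⟩ := ht.is_open_generated_countable
  rw [← generateFrom_union]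
  exact .mk' (hb.union hs)

lemma nhds_inf_generateFrom_compl (t : TopologicalSpace X) {A : Set X} {a : X} (ha : a ∈ A) :
    @nhds X (t ⊓ generateFrom {Aᶜ}) a = @nhds X t a := by
  rw [nhds_inf, nhds_generateFrom]
  simp [and_comm (a := a ∈ _), iInf_and, ha]

lemma isClosed_inf_generateFrom_compl (t : TopologicalSpace X) (A : Set X) :
    @IsClosed X (t ⊓ generateFrom {Aᶜ}) A :=
  @IsClosed.mk X (t ⊓ generateFrom {Aᶜ}) A <|
    TopologicalSpace.le_def.mp (inf_le_right : t ⊓ generateFrom {Aᶜ} ≤ _) _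
      (isOpen_generateFrom_of_mem (mem_singleton _))

lemma IsGδ.of_nhds_le {t t' : TopologicalSpace X} {A : Set X}
    (hnhds : ∀ a ∈ A, @nhds X t a ≤ @nhds X t' a) (hA : @IsGδ X t' A) : @IsGδ X t A := by
  obtain ⟨T, hTo, hTc, rfl⟩ := hA
  have hsub : ∀ G ∈ T, ⋂₀ T ⊆ @interior X t G := fun G hG a ha =>
    (@mem_interior_iff_mem_nhds X t _ _).mpr <|
      hnhds a ha <| @IsOpen.mem_nhds X t' _ _ (hTo G hG) (ha G hG)
  refine ⟨@interior X t '' T, forall_mem_image.mpr fun _ _ => @isOpen_interior X t _,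
    hTc.image _, ?_⟩
  rw [sInter_image]
  exact (subset_iInter₂ hsub).antisymm <| subset_sInter fun G hG =>
    (biInter_subset_of_mem hG).trans (@interior_subset X t _)

end Refinement

section Symmetrizable

variable {X : Type*} [TopologicalSpace X] [T2Space X]

lemma GeneratesTopology.exists_lt_of_tendsto {d : X → X → ℝ} (hd : GeneratesTopology d)
    (hdiag : ∀ x, d x x = 0) {y : ℕ → X} {a : X} (hy : Tendsto y atTop (𝓝 a)) {ε : ℝ}
    (hε : 0 < ε) : ∃ k, d a (y k) < ε := by
  by_contra! hfar
  -- `d`-balls need not be neighbourhoods, so we show instead that `(range y)ᶜ` is one of `a`.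
  have hopen : IsOpen (range y)ᶜ := by
    refine (hd _).2 fun z hz => ?_
    by_cases hza : z = a
    · subst hza
      exact ⟨ε, hε, by rintro _ hw ⟨k, rfl⟩; exact (hfar k).not_gt hw⟩
    · have hclosed : IsClosed (insert a (range y)) := hy.isCompact_insert_range.isClosed
      obtain ⟨δ, hδ, hball⟩ := (hd _).1 hclosed.isOpen_compl z fun hz' => hz'.elim hza hz
      exact ⟨δ, hδ, fun w hw hwy => hball hw (mem_insert_of_mem a hwy)⟩
  have ha : a ∈ (range y)ᶜ := by
    rintro ⟨k, hk⟩
    have := hfar k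
    rw [hk, hdiag] at this
    linarith
  obtain ⟨k, hk⟩ := (hy.eventually (hopen.mem_nhds ha)).exists
  exact hk (mem_range_self k)

lemma Symmetrizable.isGδ_of_isClosed [FirstCountableTopology X] (hX : Symmetrizable X)
    {A : Set X} (hA : IsClosed A) : IsGδ A := by
  obtain ⟨d, ⟨-, hzero, hsymm⟩, hd⟩ := hX
  let C : ℕ → Set X := fun n => {x | ∀ b ∈ A, 1 / (n + 1 : ℝ) ≤ d b x}
  have hcompl : Aᶜ ⊆ ⋃ n, C n := by
    intro x hx
    obtain ⟨ε, hε, hball⟩ := (hd Aᶜ).1 hA.isOpen_compl x hx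
    obtain ⟨n, hn⟩ := exists_nat_one_div_lt hε
    exact mem_iUnion.2 ⟨n, fun b hb => hsymm x b ▸ not_lt.1 fun h => hball (h.trans hn) hb⟩
  have hfar : ∀ n, A ⊆ (closure (C n))ᶜ := by
    intro n a ha hcl
    obtain ⟨y, hyC, hy⟩ := mem_closure_iff_seq_limit.1 hcl
    obtain ⟨k, hk⟩ := hd.exists_lt_of_tendsto (fun x => (hzero x x).2 rfl) hy
      (by positivity : (0 : ℝ) < 1 / (n + 1))
    exact (hyC k a ha).not_gt hk
  have hA_eq : A = ⋂ n, (closure (C n))ᶜ := by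
    refine (subset_iInter hfar).antisymm fun x hx => by_contra fun hxA => ?_
    obtain ⟨n, hn⟩ := mem_iUnion.1 (hcompl hxA)
    exact mem_iInter.1 hx n (subset_closure hn)
  rw [hA_eq]
  exact .iInter_of_isOpen fun n => isClosed_closure.isOpen_compl

end Symmetrizable

/-- There is a second-countable Hausdorff non-symmetrizable space of cardinality `𝔮₂`. -/
theorem exists_nonsymmetrizable_hausdorff :
    ∃ (X : Type u) (tX : TopologicalSpace X),
      @SecondCountableTopology X tX ∧ @T2Space X tX ∧
      ¬ @Symmetrizable X tX ∧ Cardinal.mk X = q2.{u} := by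
  obtain ⟨Y, tY, hY₂, hYT₂, hYQ, hYq₂⟩ := exists_not_qSpace_mk_eq_q2.{u}
  obtain ⟨A, hA⟩ := not_forall.mp hYQ
  let tX := tY ⊓ generateFrom {Aᶜ}
  have hX₂ : @SecondCountableTopology Y tX :=
    secondCountableTopology_inf_generateFrom tY (countable_singleton Aᶜ)
  have hXT₂ : @T2Space Y tX := t2Space_antitone inf_le_left hYT₂
  refine ⟨Y, tX, hX₂, hXT₂, fun hsym => hA ?_, hYq₂⟩
  have hAδ : @IsGδ Y tX A := @Symmetrizable.isGδ_of_isClosed Y tX hXT₂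
    hX₂.to_firstCountableTopology hsym A (isClosed_inf_generateFrom_compl tY A)
  exact IsGδ.of_nhds_le (fun a ha => (nhds_inf_generateFrom_compl tY ha).ge) hAδ
end
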